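/- (Kummer-type congruence.) Assume a_1 ∈ ℤ_p is a unit. For integers k, k', n ≥ 0 with k ≡ k' (mod (p−1)p^n), the limits L(k) := lim_{N→∞} ((1−u)/(1−u^{d·p^N})) · Σ_{0 ≤ x < dp^N, p∤x} χ(x)·[a_1 x : q]^k · u^x and L(k') (defined in the same way with exponent k') both exist in ℂ_p, and |L(k) − L(k')|_p ≤ p^{−n}. (This is the paper's congruence L_{p,q:a_1}(u:−k, χω^k) ≡ L_{p,q:a_1}(u:−k', χω^{k'}) (mod p^n), written without the Teichmüller twist: since (p−1) divides k−k', the Teichmüller factors ω^k and ω^{k'} agree.) -/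
import Mathlib


open Filter Finset

/-- For `q` in a normed field and a `p`-adic integer `z`, the power `q^z`, defined as the
limit of `q^(z mod p^N)` (for convergent `q` this agrees with `exp_p (z · log_p q)`). -/
noncomputable def qpow {p : ℕ} [Fact p.Prime] {K : Type*} [NormedField K] (q : K) (z : ℤ_[p]) :
    K :=
  limUnder atTop fun N : ℕ => q ^ (z.appr N)

/-- The `q`-number `[z : q] = (1 - q^z)/(1 - q)` for a `p`-adic integer `z`. -/
noncomputable def qnum {p : ℕ} [Fact p.Prime] {K : Type*} [NormedField K] (q : K) (z : ℤ_[p]) :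
    K :=
  (1 - qpow q z) / (1 - q)

/-- The `q`-analogue of the Euler–Barnes polynomial
`H_n^{(r)}(w, u, q | a_1, …, a_r)
  = (1-u)^r (1-q)^{-n} ∑_{l=0}^n C(n,l) (-1)^l q^{lw} ∏_j (1 - q^{l a_j} u)⁻¹`. -/
noncomputable def qEulerBarnes {p : ℕ} [Fact p.Prime] {K : Type*} [NormedField K]
    (r n : ℕ) (w : ℤ_[p]) (u q : K) (a : Fin r → ℤ_[p]) : K :=
  (1 - u) ^ r * ((1 - q)⁻¹) ^ n *
    ∑ l ∈ Finset.range (n + 1),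
      (n.choose l : K) * (-1) ^ l * qpow q ((l : ℤ_[p]) * w) *
        ∏ j, (1 - qpow q ((l : ℤ_[p]) * a j) * u)⁻¹


open IsUltrametricDist


section Aux
variable {K : Type*} [NormedField K] [IsUltrametricDist K]

lemma aux_norm_le_one_of_sub {x : K} (hx : ‖x - 1‖ ≤ 1) : ‖x‖ ≤ 1 := by
  calc ‖x‖ = ‖(x - 1) + 1‖ := by ring_nf
  _ ≤ max ‖x - 1‖ ‖(1 : K)‖ := norm_add_le_max _ _
  _ ≤ 1 := by simp [hx]

lemma aux_norm_eq_one_of_sub {x : K} (hx : ‖x - 1‖ < 1) : ‖x‖ = 1 := by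
  refine le_antisymm (aux_norm_le_one_of_sub hx.le) ?_
  have : ‖(1:K)‖ ≤ max ‖x - 1‖ ‖x‖ := by
    calc ‖(1:K)‖ = ‖(x - 1) - (x - 1 - 1) - 1 + 1‖ := by ring_nf
    _ = ‖-(x-1) + x‖ := by ring_nf
    _ ≤ max ‖-(x-1)‖ ‖x‖ := norm_add_le_max _ _
    _ = max ‖x - 1‖ ‖x‖ := by rw [norm_neg]
  simp only [norm_one] at this
  rcases max_cases ‖x - 1‖ ‖x‖ with ⟨h1, _⟩ | ⟨h1, _⟩ <;> rw [h1] at this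
  · linarith
  · exact this

lemma aux_pow_sub_one_le {x : K} (hx : ‖x - 1‖ ≤ 1) (s : ℕ) : ‖x ^ s - 1‖ ≤ ‖x - 1‖ := by
  induction s with
  | zero => simpa using norm_nonneg _
  | succ s ih =>
    have h1 : x ^ (s + 1) - 1 = x ^ s * (x - 1) + (x ^ s - 1) := by ring
    have h2 : ‖x ^ s‖ ≤ 1 := by
      rw [norm_pow]; exact pow_le_one₀ (norm_nonneg _) (aux_norm_le_one_of_sub hx)
    calc ‖x ^ (s+1) - 1‖ ≤ max ‖x ^ s * (x - 1)‖ ‖x ^ s - 1‖ := h1 ▸ norm_add_le_max _ _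
    _ ≤ ‖x - 1‖ := by
        apply max_le _ ih
        rw [norm_mul]
        calc ‖x^s‖ * ‖x - 1‖ ≤ 1 * ‖x - 1‖ := by
              apply mul_le_mul_of_nonneg_right h2 (norm_nonneg _)
        _ = ‖x - 1‖ := one_mul _

lemma aux_pow_sub_pow_le {a b : K} (ha : ‖a‖ ≤ 1) (hb : ‖b‖ ≤ 1) (k : ℕ) :
    ‖a ^ k - b ^ k‖ ≤ ‖a - b‖ := by
  induction k with
  | zero => simpa using norm_nonneg _
  | succ s ih =>
    have h1 : a ^ (s + 1) - b ^ (s + 1) = a * (a ^ s - b ^ s) + (a - b) * b ^ s := by ring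
    calc ‖a ^ (s+1) - b ^ (s+1)‖ ≤ max ‖a * (a^s - b^s)‖ ‖(a - b) * b ^ s‖ :=
          h1 ▸ norm_add_le_max _ _
    _ ≤ ‖a - b‖ := by
        apply max_le <;> rw [norm_mul]
        · calc ‖a‖ * ‖a^s - b^s‖ ≤ 1 * ‖a - b‖ :=
            mul_le_mul ha ih (norm_nonneg _) zero_le_one
          _ = _ := one_mul _
        · calc ‖a - b‖ * ‖b^s‖ ≤ ‖a - b‖ * 1 :=
            mul_le_mul_of_nonneg_left (by
              rw [norm_pow]; exact pow_le_one₀ (norm_nonneg _) hb) (norm_nonneg _)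
          _ = _ := mul_one _

end Aux


section AuxP
variable {p : ℕ} [hp : Fact p.Prime] {K : Type*} [NormedField K] [IsUltrametricDist K]
  (hpK : ‖(p : K)‖ = (p : ℝ)⁻¹)

/-- the radius of convergence bound -/
noncomputable def rho (p : ℕ) : ℝ := (p : ℝ) ^ (-(1 : ℝ) / ((p : ℝ) - 1))

lemma rho_le_one : rho p ≤ 1 := by
  have h2 : (2 : ℝ) ≤ (p : ℝ) := by exact_mod_cast hp.out.two_le
  apply Real.rpow_le_one_of_one_le_of_nonpos (by linarith)
  apply div_nonpos_of_nonpos_of_nonneg <;> linarith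

lemma rho_pow_eq : rho p ^ (p - 1) = (p : ℝ)⁻¹ := by
  have h2 : (2 : ℝ) ≤ (p : ℝ) := by exact_mod_cast hp.out.two_le
  have hp0 : (0 : ℝ) ≤ (p : ℝ) := by linarith
  rw [rho, ← Real.rpow_natCast ((p:ℝ) ^ (-(1:ℝ)/((p:ℝ)-1))) (p-1), ← Real.rpow_mul hp0]
  have hc : ((p - 1 : ℕ) : ℝ) = (p : ℝ) - 1 := by
    have := hp.out.two_le
    push_cast [Nat.cast_sub (by omega : 1 ≤ p)]; ring
  rw [hc]
  have : -(1:ℝ) / ((p:ℝ) - 1) * ((p:ℝ) - 1) = -1 :=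
    div_mul_cancel₀ (-1) (by linarith : (p:ℝ) - 1 ≠ 0)
  rw [this, Real.rpow_neg_one]

include hpK in
lemma aux_pow_p_sub_one {x : K} (hx : ‖x - 1‖ < rho p) :
    ‖x ^ p - 1‖ ≤ (p : ℝ)⁻¹ * ‖x - 1‖ := by
  have hr1 : ‖x - 1‖ ≤ 1 := hx.le.trans rho_le_one
  have hxp : x ^ p = ∑ j ∈ range (p + 1), (x - 1) ^ j * 1 ^ (p - j) * (p.choose j : K) := by
    have := add_pow (x - 1) 1 p
    simpa using this
  have hkey : x ^ p - 1 = ∑ j ∈ range p, (x - 1) ^ (j + 1) * (p.choose (j + 1) : K) := by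
    rw [hxp, Finset.sum_range_succ' (fun j => (x - 1) ^ j * 1 ^ (p - j) * (p.choose j : K)) p]
    simp [one_pow]
  rw [hkey]
  apply norm_sum_le_of_forall_le_of_nonneg
  · positivity
  intro j hj
  simp only [Finset.mem_range] at hj
  rw [norm_mul, norm_pow]
  rcases eq_or_lt_of_le (Nat.succ_le_of_lt hj) with he | hlt
  · -- j + 1 = p
    have he' : j + 1 = p := he
    rw [he', Nat.choose_self]
    simp only [Nat.cast_one, norm_one, mul_one]
    have hj1 : ‖x - 1‖ ^ p = ‖x - 1‖ ^ (p - 1) * ‖x - 1‖ := by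
      rw [← pow_succ]; congr 1; omega
    rw [hj1]
    apply mul_le_mul_of_nonneg_right _ (norm_nonneg _)
    calc ‖x - 1‖ ^ (p - 1) ≤ rho p ^ (p - 1) :=
      pow_le_pow_left₀ (norm_nonneg _) hx.le _
    _ = (p : ℝ)⁻¹ := rho_pow_eq
  · -- j + 1 < p
    obtain ⟨c, hc⟩ := hp.out.dvd_choose_self (Nat.succ_ne_zero j) hlt
    have : ‖(p.choose (j+1) : K)‖ ≤ (p : ℝ)⁻¹ := by
      rw [hc]
      push_cast
      rw [norm_mul, hpK]
      calc (p:ℝ)⁻¹ * ‖(c : K)‖ ≤ (p:ℝ)⁻¹ * 1 :=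
        mul_le_mul_of_nonneg_left (norm_natCast_le_one K c) (by positivity)
      _ = _ := mul_one _
    calc ‖x - 1‖ ^ (j + 1) * ‖(p.choose (j+1) : K)‖
        ≤ ‖x - 1‖ * (p : ℝ)⁻¹ := by
          apply mul_le_mul _ this (norm_nonneg _) (norm_nonneg _)
          calc ‖x-1‖ ^ (j+1) ≤ ‖x-1‖ ^ 1 :=
            pow_le_pow_of_le_one (norm_nonneg _) hr1 (by omega)
          _ = _ := pow_one _
    _ = (p : ℝ)⁻¹ * ‖x - 1‖ := mul_comm _ _

include hpK in
lemma aux_pow_pN_sub_one {x : K} (hx : ‖x - 1‖ < rho p) (N : ℕ) :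
    ‖x ^ (p ^ N) - 1‖ ≤ ((p : ℝ)⁻¹) ^ N * ‖x - 1‖ ∧ ‖x ^ (p ^ N) - 1‖ < rho p := by
  have hp1 : (1 : ℝ) < (p : ℝ) := by exact_mod_cast hp.out.one_lt
  have hpinv : (p : ℝ)⁻¹ ≤ 1 := by
    rw [inv_le_one_iff₀]; right; linarith
  have hpinv0 : (0:ℝ) ≤ (p:ℝ)⁻¹ := by positivity
  induction N with
  | zero =>
    constructor
    · simp
    · simpa using hx
  | succ N ih =>
    obtain ⟨ih1, ih2⟩ := ih
    have hstep := aux_pow_p_sub_one hpK ih2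
    rw [← pow_mul, ← pow_succ] at hstep
    constructor
    · calc ‖x ^ p ^ (N+1) - 1‖ ≤ (p:ℝ)⁻¹ * ‖x ^ (p ^ N) - 1‖ := hstep
      _ ≤ (p:ℝ)⁻¹ * (((p : ℝ)⁻¹) ^ N * ‖x - 1‖) := mul_le_mul_of_nonneg_left ih1 hpinv0
      _ = ((p : ℝ)⁻¹) ^ (N + 1) * ‖x - 1‖ := by ring
    · calc ‖x ^ p ^ (N+1) - 1‖ ≤ (p:ℝ)⁻¹ * ‖x ^ (p ^ N) - 1‖ := hstep
      _ ≤ 1 * ‖x ^ (p ^ N) - 1‖ := mul_le_mul_of_nonneg_right hpinv (norm_nonneg _)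
      _ = ‖x ^ (p ^ N) - 1‖ := one_mul _
      _ < rho p := ih2

include hpK in
lemma aux_pow_mul_pN_sub_one {x : K} (hx : ‖x - 1‖ < rho p) (c N : ℕ) :
    ‖x ^ (c * p ^ N) - 1‖ ≤ ((p : ℝ)⁻¹) ^ N * ‖x - 1‖ := by
  obtain ⟨h1, h2⟩ := aux_pow_pN_sub_one hpK hx N
  rw [mul_comm c, pow_mul]
  calc ‖(x ^ p ^ N) ^ c - 1‖ ≤ ‖x ^ p ^ N - 1‖ :=
    aux_pow_sub_one_le (h2.le.trans rho_le_one) c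
  _ ≤ _ := h1

end AuxP

section QPow
variable {p : ℕ} [hp : Fact p.Prime] {K : Type*} [NormedField K] [CompleteSpace K]
  [IsUltrametricDist K] (hpK : ‖(p : K)‖ = (p : ℝ)⁻¹) {q : K} (hq1 : ‖q - 1‖ < rho p)

lemma appr_succ_exists (z : ℤ_[p]) (N : ℕ) :
    ∃ c : ℕ, z.appr (N + 1) = z.appr N + c * p ^ N := by
  have hmono : z.appr N ≤ z.appr (N + 1) := z.appr_mono (by omega)
  have h1 : z - z.appr N ∈ Ideal.span {(p : ℤ_[p]) ^ N} := PadicInt.appr_spec N z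
  have h2 : z - z.appr (N + 1) ∈ Ideal.span {(p : ℤ_[p]) ^ N} := by
    have := PadicInt.appr_spec (N + 1) z
    rw [Ideal.mem_span_singleton] at this ⊢
    exact dvd_trans (pow_dvd_pow _ (by omega)) this
  rw [Ideal.mem_span_singleton] at h1 h2
  have h3 : (p : ℤ_[p]) ^ N ∣ ((z.appr (N+1) : ℤ_[p]) - (z.appr N : ℤ_[p])) := by
    have : ((z.appr (N+1) : ℤ_[p]) - (z.appr N : ℤ_[p]))
        = (z - z.appr N) - (z - z.appr (N+1)) := by ring
    rw [this]; exact dvd_sub h1 h2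
  have h4 : (p : ℤ_[p]) ^ N ∣ ((z.appr (N+1) : ℤ) - (z.appr N : ℤ) : ℤ) := by
    push_cast at h3 ⊢; exact_mod_cast h3
  rw [PadicInt.pow_p_dvd_int_iff] at h4
  have h5 : ((p : ℤ) ^ N) ∣ ((z.appr (N+1) - z.appr N : ℕ) : ℤ) := by
    rwa [Int.ofNat_sub hmono]
  have h6 : p ^ N ∣ (z.appr (N+1) - z.appr N) := by exact_mod_cast h5
  obtain ⟨c, hc⟩ := h6
  exact ⟨c, by rw [mul_comm c]; omega⟩

include hpK hq1 in
lemma qpow_cauchy (z : ℤ_[p]) : CauchySeq (fun N : ℕ => q ^ (z.appr N)) := by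
  have hqn : ‖q‖ = 1 := aux_norm_eq_one_of_sub (lt_of_lt_of_le hq1 rho_le_one)
  apply SeminormedAddCommGroup.cauchySeq_of_le_geometric
    (C := ‖q - 1‖) (r := (p : ℝ)⁻¹)
  · rw [inv_lt_one_iff₀]; right; exact_mod_cast hp.out.one_lt
  · intro N
    obtain ⟨c, hc⟩ := appr_succ_exists z N
    rw [hc, pow_add, mul_comm (‖q - 1‖)]
    have : q ^ z.appr N - q ^ z.appr N * q ^ (c * p ^ N)
        = q ^ z.appr N * (1 - q ^ (c * p ^ N)) := by ring
    rw [this, norm_mul, norm_pow, hqn, one_pow, one_mul, norm_sub_rev]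
    exact aux_pow_mul_pN_sub_one hpK hq1 c N

include hpK hq1 in
lemma qpow_tendsto (z : ℤ_[p]) :
    Tendsto (fun N : ℕ => q ^ (z.appr N)) atTop (nhds (qpow q z)) := by
  obtain ⟨L, hL⟩ := cauchySeq_tendsto_of_complete (qpow_cauchy hpK hq1 z)
  rwa [show qpow q z = L from hL.limUnder_eq]

include hpK hq1 in
lemma qnum_tendsto (z : ℤ_[p]) :
    Tendsto (fun N : ℕ => (1 - q ^ (z.appr N)) / (1 - q)) atTop (nhds (qnum q z)) :=
  (tendsto_const_nhds.sub (qpow_tendsto hpK hq1 z)).div_const (1 - q)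

include hpK hq1 in
lemma qnum_norm_le_one (hq0 : q ≠ 1) (z : ℤ_[p]) : ‖qnum q z‖ ≤ 1 := by
  apply le_of_tendsto ((qnum_tendsto hpK hq1 z).norm)
  filter_upwards with N
  rw [norm_div, div_le_one (by simpa [norm_sub_rev, sub_ne_zero] using hq0), norm_sub_rev,
    norm_sub_rev (1:K) q]
  exact aux_pow_sub_one_le (hq1.le.trans rho_le_one) _

include hpK hq1 in
lemma qnum_fin_dist_le (hq0 : q ≠ 1) {s s' : ℕ} (hle : s' ≤ s) (N : ℕ)
    (h : ((p : ℤ) ^ N) ∣ ((s : ℤ) - (s' : ℤ))) :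
    ‖(1 - q ^ s) / (1 - q) - (1 - q ^ s') / (1 - q)‖ ≤ ((p : ℝ)⁻¹) ^ N := by
  have hqn : ‖q‖ = 1 := aux_norm_eq_one_of_sub (lt_of_lt_of_le hq1 rho_le_one)
  have hq1' : (1 : K) - q ≠ 0 := by simpa [sub_ne_zero] using fun h => hq0 h.symm
  have hc : ∃ c : ℕ, s = s' + c * p ^ N := by
    have : ((p : ℤ) ^ N) ∣ ((s - s' : ℕ) : ℤ) := by rwa [Int.ofNat_sub hle]
    have h6 : p ^ N ∣ s - s' := by exact_mod_cast this
    obtain ⟨c, hc⟩ := h6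
    exact ⟨c, by rw [mul_comm c]; omega⟩
  obtain ⟨c, rfl⟩ := hc
  have key : (1 - q ^ (s' + c * p ^ N)) / (1 - q) - (1 - q ^ s') / (1 - q)
      = q ^ s' * (1 - q ^ (c * p ^ N)) / (1 - q) := by
    field_simp
    ring
  rw [key, norm_div, norm_mul, norm_pow, hqn, one_pow, one_mul]
  rw [div_le_iff₀ (by simpa [norm_pos_iff] using hq1')]
  calc ‖1 - q ^ (c * p ^ N)‖ = ‖q ^ (c * p ^ N) - 1‖ := norm_sub_rev _ _
  _ ≤ ((p : ℝ)⁻¹) ^ N * ‖q - 1‖ := aux_pow_mul_pN_sub_one hpK hq1 c N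
  _ = ((p : ℝ)⁻¹) ^ N * ‖1 - q‖ := by rw [norm_sub_rev]

include hpK hq1 in
lemma qnum_fin_dist (hq0 : q ≠ 1) (s s' : ℕ) (N : ℕ)
    (h : ((p : ℤ) ^ N) ∣ ((s : ℤ) - (s' : ℤ))) :
    ‖(1 - q ^ s) / (1 - q) - (1 - q ^ s') / (1 - q)‖ ≤ ((p : ℝ)⁻¹) ^ N := by
  rcases le_total s' s with hle | hle
  · exact qnum_fin_dist_le hpK hq1 hq0 hle N h
  · rw [norm_sub_rev]
    refine qnum_fin_dist_le hpK hq1 hq0 hle N ?_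
    rw [show (s' : ℤ) - s = -((s : ℤ) - s') by ring]
    exact dvd_neg.mpr h

include hpK hq1 in
lemma qnum_dist (hq0 : q ≠ 1) (z z' : ℤ_[p]) (N : ℕ) (h : ((p : ℤ_[p]) ^ N) ∣ (z - z')) :
    ‖qnum q z - qnum q z'‖ ≤ ((p : ℝ)⁻¹) ^ N := by
  apply le_of_tendsto (((qnum_tendsto hpK hq1 z).sub (qnum_tendsto hpK hq1 z')).norm)
  filter_upwards [eventually_ge_atTop N] with M hM
  apply qnum_fin_dist hpK hq1 hq0
  have h1 : (p : ℤ_[p]) ^ N ∣ z - z.appr M := by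
    have := PadicInt.appr_spec M z
    rw [Ideal.mem_span_singleton] at this
    exact dvd_trans (pow_dvd_pow _ hM) this
  have h2 : (p : ℤ_[p]) ^ N ∣ z' - z'.appr M := by
    have := PadicInt.appr_spec M z'
    rw [Ideal.mem_span_singleton] at this
    exact dvd_trans (pow_dvd_pow _ hM) this
  have h3 : (p : ℤ_[p]) ^ N ∣ ((z.appr M : ℤ_[p]) - (z'.appr M : ℤ_[p])) := by
    have heq : (z.appr M : ℤ_[p]) - (z'.appr M : ℤ_[p])
        = (z - z') - (z - z.appr M) + (z' - z'.appr M) := by ring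
    rw [heq]
    exact dvd_add (dvd_sub h h1) h2
  rw [← PadicInt.pow_p_dvd_int_iff]
  push_cast at h3 ⊢
  exact_mod_cast h3

include hpK hq1 in
lemma kummer_fin (hq0 : q ≠ 1) {s : ℕ} (hs : ¬ p ∣ s) {k k' n : ℕ} (hk : k' ≤ k)
    (hdvd : (p - 1) * p ^ n ∣ k - k') :
    ‖((1 - q ^ s) / (1 - q)) ^ k - ((1 - q ^ s) / (1 - q)) ^ k'‖ ≤ ((p : ℝ)⁻¹) ^ n := by
  have hppos : 1 < p := hp.out.one_lt
  have hp1 : (1 : ℝ) < (p : ℝ) := by exact_mod_cast hppos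
  have hpinv1 : (p : ℝ)⁻¹ ≤ 1 := by rw [inv_le_one_iff₀]; right; linarith
  have hpinv0 : (0:ℝ) ≤ (p:ℝ)⁻¹ := by positivity
  have hq1le : ‖q - 1‖ ≤ 1 := hq1.le.trans rho_le_one
  have hqn : ‖q‖ = 1 := aux_norm_eq_one_of_sub (lt_of_lt_of_le hq1 rho_le_one)
  have hq1' : (1 : K) - q ≠ 0 := by simpa [sub_ne_zero] using fun h => hq0 h.symm
  set α : K := (1 - q ^ s) / (1 - q) with hα
  -- α is a geometric sum
  have hgeom : α = ∑ j ∈ range s, q ^ j := by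
    rw [hα, div_eq_iff hq1']
    have := geom_sum_mul q s
    calc 1 - q ^ s = -((∑ i ∈ range s, q ^ i) * (q - 1)) := by rw [this]; ring
    _ = (∑ j ∈ range s, q ^ j) * (1 - q) := by ring
  have hα1 : ‖α‖ ≤ 1 := by
    rw [hα, norm_div, div_le_one (by simpa [norm_pos_iff] using hq1'), norm_sub_rev,
      norm_sub_rev (1:K) q]
    exact aux_pow_sub_one_le hq1le _
  -- α is close to s
  have hαs : ‖α - (s : K)‖ ≤ ‖q - 1‖ := by
    have hcast : (s : K) = ∑ _j ∈ range s, (1 : K) := by simp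
    rw [hgeom, hcast, ← Finset.sum_sub_distrib]
    apply norm_sum_le_of_forall_le_of_nonneg (norm_nonneg _)
    intro j _
    exact aux_pow_sub_one_le hq1le j
  -- norm of s is 1
  have hs0 : s ≠ 0 := fun h => hs (h ▸ dvd_zero p)
  have hcop : Nat.Coprime s p := Nat.coprime_comm.mp (hp.out.coprime_iff_not_dvd.mpr hs)
  have hsle : ‖(s : K)‖ ≤ 1 := norm_natCast_le_one K s
  have hsK : ‖(s : K)‖ = 1 := by
    have he := Nat.ModEq.pow_totient hcop
    rw [Nat.totient_prime hp.out] at he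
    have h1e : 1 ≤ s ^ (p - 1) := Nat.one_le_iff_ne_zero.mpr (pow_ne_zero _ hs0)
    obtain ⟨c, hc⟩ := (Nat.modEq_iff_dvd' h1e).mp he.symm
    have hec : s ^ (p - 1) = 1 + p * c := by omega
    have hnorm : ‖((s : K)) ^ (p - 1) - 1‖ ≤ (p : ℝ)⁻¹ := by
      have : ((s : K)) ^ (p - 1) - 1 = (p : K) * (c : K) := by
        rw [← Nat.cast_pow, hec]; push_cast; ring
      rw [this, norm_mul, hpK]
      calc (p:ℝ)⁻¹ * ‖(c:K)‖ ≤ (p:ℝ)⁻¹ * 1 :=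
        mul_le_mul_of_nonneg_left (norm_natCast_le_one K c) hpinv0
      _ = _ := mul_one _
    have hnorm1 : ‖((s : K)) ^ (p - 1)‖ = 1 :=
      aux_norm_eq_one_of_sub (lt_of_le_of_lt hnorm (by rw [inv_lt_one_iff₀]; right; linarith))
    rw [norm_pow] at hnorm1
    refine le_antisymm hsle ?_
    calc (1:ℝ) = ‖(s:K)‖ ^ (p - 1) := hnorm1.symm
    _ ≤ ‖(s:K)‖ ^ 1 := pow_le_pow_of_le_one (norm_nonneg _) hsle (by omega)
    _ = ‖(s:K)‖ := pow_one _
  have hsne : (s : K) ≠ 0 := by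
    intro h; rw [h, norm_zero] at hsK; linarith
  -- Euler's theorem modulo p^(n+1)
  have hsM : ‖((s : K)) ^ ((p - 1) * p ^ n) - 1‖ ≤ ((p : ℝ)⁻¹) ^ (n + 1) := by
    have hcop2 : Nat.Coprime s (p ^ (n + 1)) := hcop.pow_right _
    have he := Nat.ModEq.pow_totient hcop2
    rw [Nat.totient_prime_pow hp.out (by omega : 0 < n + 1)] at he
    have hexp : p ^ (n + 1 - 1) * (p - 1) = (p - 1) * p ^ n := by
      simp [mul_comm]
    rw [hexp] at he
    have h1e : 1 ≤ s ^ ((p - 1) * p ^ n) := Nat.one_le_iff_ne_zero.mpr (pow_ne_zero _ hs0)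
    obtain ⟨c, hc⟩ := (Nat.modEq_iff_dvd' h1e).mp he.symm
    have hec : s ^ ((p - 1) * p ^ n) = 1 + p ^ (n + 1) * c := by omega
    have : ((s : K)) ^ ((p - 1) * p ^ n) - 1 = (p : K) ^ (n + 1) * (c : K) := by
      rw [← Nat.cast_pow, hec]; push_cast; ring
    rw [this, norm_mul, norm_pow, hpK]
    calc ((p:ℝ)⁻¹) ^ (n+1) * ‖(c:K)‖ ≤ ((p:ℝ)⁻¹) ^ (n+1) * 1 :=
      mul_le_mul_of_nonneg_left (norm_natCast_le_one K c) (by positivity)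
    _ = _ := mul_one _
  -- the ratio b = α / s
  set b : K := α / (s : K) with hb
  have hαb : α = (s : K) * b := by
    rw [hb, mul_div_cancel₀ _ hsne]
  have hb1 : ‖b - 1‖ ≤ ‖q - 1‖ := by
    have hth : b - 1 = (α - (s : K)) / (s : K) := by
      rw [hb, div_sub_one hsne]
    rw [hth, norm_div, hsK, div_one]
    exact hαs
  have hb1' : ‖b - 1‖ < rho p := lt_of_le_of_lt hb1 hq1
  obtain ⟨m, hm⟩ := hdvd
  -- bound on b ^ (k - k')
  have hbM : ‖b ^ (k - k') - 1‖ ≤ ((p : ℝ)⁻¹) ^ n * ‖q - 1‖ := by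
    have hexp : k - k' = ((p - 1) * m) * p ^ n := by rw [hm]; ring
    rw [hexp, pow_mul]
    have hγ : ‖b ^ ((p - 1) * m) - 1‖ ≤ ‖b - 1‖ :=
      aux_pow_sub_one_le (hb1.trans hq1le) _
    have hγ' : ‖b ^ ((p - 1) * m) - 1‖ < rho p := lt_of_le_of_lt hγ hb1'
    calc ‖(b ^ ((p-1)*m)) ^ (p ^ n) - 1‖ ≤ ((p : ℝ)⁻¹) ^ n * ‖b ^ ((p-1)*m) - 1‖ :=
      (aux_pow_pN_sub_one hpK hγ' n).1
    _ ≤ ((p : ℝ)⁻¹) ^ n * ‖q - 1‖ :=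
      mul_le_mul_of_nonneg_left (hγ.trans hb1) (by positivity)
  -- bound on s ^ (k - k')
  have hsMk : ‖((s : K)) ^ (k - k') - 1‖ ≤ ((p : ℝ)⁻¹) ^ (n + 1) := by
    rw [hm, pow_mul]
    calc ‖(((s:K)) ^ ((p-1) * p ^ n)) ^ m - 1‖ ≤ ‖((s:K)) ^ ((p-1) * p ^ n) - 1‖ :=
      aux_pow_sub_one_le (hsM.trans (by
        calc ((p:ℝ)⁻¹) ^ (n+1) ≤ 1 ^ (n+1) := pow_le_pow_left₀ hpinv0 hpinv1 _
        _ = 1 := one_pow _)) m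
    _ ≤ _ := hsM
  -- bound on α ^ (k - k')
  have hαM : ‖α ^ (k - k') - 1‖ ≤ ((p : ℝ)⁻¹) ^ n := by
    have hsplit : α ^ (k - k') - 1
        = ((s:K)) ^ (k - k') * (b ^ (k - k') - 1) + (((s:K)) ^ (k - k') - 1) := by
      rw [hαb, mul_pow]; ring
    rw [hsplit]
    apply le_trans (norm_add_le_max _ _)
    apply max_le
    · rw [norm_mul, norm_pow, hsK, one_pow, one_mul]
      calc ‖b ^ (k - k') - 1‖ ≤ ((p : ℝ)⁻¹) ^ n * ‖q - 1‖ := hbM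
      _ ≤ ((p : ℝ)⁻¹) ^ n * 1 := mul_le_mul_of_nonneg_left hq1le (by positivity)
      _ = _ := mul_one _
    · calc ‖((s:K)) ^ (k - k') - 1‖ ≤ ((p : ℝ)⁻¹) ^ (n + 1) := hsMk
      _ = ((p : ℝ)⁻¹) ^ n * (p:ℝ)⁻¹ := pow_succ _ _
      _ ≤ ((p : ℝ)⁻¹) ^ n * 1 := mul_le_mul_of_nonneg_left hpinv1 (by positivity)
      _ = _ := mul_one _
  -- conclude
  have hfin : α ^ k - α ^ k' = α ^ k' * (α ^ (k - k') - 1) := by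
    rw [mul_sub, ← pow_add, mul_one]
    congr 2
    omega
  rw [hfin, norm_mul]
  have hαk : ‖α ^ k'‖ ≤ 1 := by
    rw [norm_pow]; exact pow_le_one₀ (norm_nonneg _) hα1
  calc ‖α ^ k'‖ * ‖α ^ (k - k') - 1‖ ≤ 1 * (((p : ℝ)⁻¹) ^ n) :=
    mul_le_mul hαk hαM (norm_nonneg _) zero_le_one
  _ = _ := one_mul _

include hpK hq1 in
lemma kummer_qnum (hq0 : q ≠ 1) {z : ℤ_[p]} (hz : ‖z‖ = 1) {k k' n : ℕ}
    (hkk' : Nat.ModEq ((p - 1) * p ^ n) k k') :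
    ‖qnum q z ^ k - qnum q z ^ k'‖ ≤ ((p : ℝ)⁻¹) ^ n := by
  suffices H : ∀ a b : ℕ, b ≤ a → Nat.ModEq ((p - 1) * p ^ n) a b →
      ‖qnum q z ^ a - qnum q z ^ b‖ ≤ ((p : ℝ)⁻¹) ^ n by
    rcases le_total k' k with h | h
    · exact H k k' h hkk'
    · rw [norm_sub_rev]; exact H k' k h hkk'.symm
  intro a b hba hab
  have hdvd : (p - 1) * p ^ n ∣ a - b := (Nat.modEq_iff_dvd' hba).mp hab.symm
  apply le_of_tendsto
    ((((qnum_tendsto hpK hq1 z).pow a).sub ((qnum_tendsto hpK hq1 z).pow b)).norm)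
  filter_upwards [eventually_ge_atTop 1] with M hM
  have hs : ¬ p ∣ z.appr M := by
    intro hdvd'
    have h1 : ‖((z.appr M : ℕ) : ℤ_[p])‖ < 1 := by
      rw [PadicInt.norm_lt_one_iff_dvd]
      exact_mod_cast Nat.cast_dvd_cast hdvd'
    have h2 : ‖z - (z.appr M : ℤ_[p])‖ < 1 := by
      rw [PadicInt.norm_lt_one_iff_dvd]
      have := PadicInt.appr_spec M z
      rw [Ideal.mem_span_singleton] at this
      exact dvd_trans (dvd_pow_self (p : ℤ_[p]) (by omega)) this
    have h3 : ‖z‖ < 1 := by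
      calc ‖z‖ = ‖(z.appr M : ℤ_[p]) + (z - (z.appr M : ℤ_[p]))‖ := by ring_nf
      _ ≤ max ‖((z.appr M : ℕ) : ℤ_[p])‖ ‖z - (z.appr M : ℤ_[p])‖ :=
        IsUltrametricDist.norm_add_le_max _ _
      _ < 1 := max_lt h1 h2
    rw [hz] at h3
    exact lt_irrefl _ h3
  exact kummer_fin hpK hq1 hq0 hs hba hdvd

end QPow


lemma sum_range_mul_eq {M : Type*} [AddCommMonoid M] (f : ℕ → M) (m c : ℕ) :
    ∑ x ∈ range (m * c), f x = ∑ i ∈ range c, ∑ j ∈ range m, f (m * i + j) := by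
  induction c with
  | zero => simp
  | succ c ih =>
    rw [mul_add, mul_one, Finset.sum_range_add, ih, Finset.sum_range_succ]

section H
variable {K : Type*} [NormedField K] [IsUltrametricDist K]

lemma term_bound {a b c : K} {r : ℝ} (ha : ‖a‖ ≤ 1) (hb : ‖b‖ ≤ 1) (hc : ‖c‖ ≤ r) :
    ‖a * (b * c)‖ ≤ r := by
  have h0 : (0:ℝ) ≤ r := le_trans (norm_nonneg _) hc
  have h1 : ‖b * c‖ ≤ 1 * r := by
    rw [norm_mul]; exact mul_le_mul hb hc (norm_nonneg _) zero_le_one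
  rw [one_mul] at h1
  rw [norm_mul]
  have h2 : ‖a‖ * ‖b * c‖ ≤ 1 * r := mul_le_mul ha h1 (norm_nonneg _) zero_le_one
  rwa [one_mul] at h2

lemma meas_bound {u : K} (hu : ∀ f : ℕ, 1 ≤ f → 1 ≤ ‖1 - u ^ f‖) {M x : ℕ}
    (hM : 1 ≤ M) (hx : x < M) : ‖(1 - u) / (1 - u ^ M) * u ^ x‖ ≤ 1 := by
  have hden : (1:ℝ) ≤ ‖1 - u ^ M‖ := hu M hM
  have hdenpos : (0:ℝ) < ‖1 - u ^ M‖ := lt_of_lt_of_le one_pos hden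
  rw [norm_mul, norm_div]
  rcases le_or_gt ‖u‖ 1 with h1 | h1
  · have hnum : ‖1 - u‖ ≤ 1 := by
      rw [sub_eq_add_neg]
      apply le_trans (norm_add_le_max _ _)
      simp [h1]
    have hux : ‖u ^ x‖ ≤ 1 := by
      rw [norm_pow]; exact pow_le_one₀ (norm_nonneg _) h1
    have hq : ‖1 - u‖ / ‖1 - u ^ M‖ ≤ 1 := by
      rw [div_le_one hdenpos]
      exact hnum.trans hden
    have h2 : ‖1 - u‖ / ‖1 - u ^ M‖ * ‖u ^ x‖ ≤ 1 * 1 :=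
      mul_le_mul hq hux (norm_nonneg _) zero_le_one
    rwa [one_mul] at h2
  · have hnum : ‖1 - u‖ = ‖u‖ := by
      rw [sub_eq_add_neg, add_comm]
      rw [norm_add_eq_max_of_norm_ne_norm (by simpa using h1.ne')]
      simp [le_of_lt h1]
    have hden' : ‖1 - u ^ M‖ = ‖u‖ ^ M := by
      rw [sub_eq_add_neg, add_comm]
      rw [norm_add_eq_max_of_norm_ne_norm]
      · simp only [norm_neg, norm_pow, norm_one]
        exact max_eq_left (one_le_pow₀ h1.le)
      · simp only [norm_neg, norm_pow, norm_one]
        exact (one_lt_pow₀ h1 (by omega)).ne'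
    rw [hnum, hden', norm_pow]
    rw [div_mul_eq_mul_div, div_le_one (by positivity)]
    calc ‖u‖ * ‖u‖ ^ x = ‖u‖ ^ (x + 1) := by ring
    _ ≤ ‖u‖ ^ M := pow_le_pow_right₀ h1.le (by omega)

lemma chi_norm_le {d : ℕ} (hd : 1 ≤ d) (χ : DirichletCharacter K d) (y : ZMod d) :
    ‖χ y‖ ≤ 1 := by
  by_cases hy : IsUnit y
  · have htot : 0 < d.totient := Nat.totient_pos.mpr (by omega)
    have hpow : y ^ d.totient = 1 := by
      have h1 := ZMod.pow_totient hy.unit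
      calc y ^ d.totient = ((hy.unit : (ZMod d)ˣ) : ZMod d) ^ d.totient := by
            rw [IsUnit.unit_spec]
      _ = ((hy.unit ^ d.totient : (ZMod d)ˣ) : ZMod d) := by
            rw [Units.val_pow_eq_pow_val]
      _ = 1 := by rw [h1]; rfl
    have h2 : (χ y) ^ d.totient = 1 := by
      rw [← map_pow, hpow, map_one]
    by_contra hlt
    push_neg at hlt
    have : (1:ℝ) < ‖χ y‖ ^ d.totient := one_lt_pow₀ hlt (by omega)
    rw [← norm_pow, h2, norm_one] at this
    exact lt_irrefl _ this
  · rw [χ.map_nonunit hy, norm_zero]; exact zero_le_one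

end H

section Main
variable {p : ℕ} [hp : Fact p.Prime] {K : Type*} [NormedField K] [CompleteSpace K]
  [IsUltrametricDist K]

/-- The Riemann sums defining the `p`-adic `q`-`L`-function. -/
noncomputable def LpqSum (a1 : ℤ_[p]) (u q : K) (d : ℕ) (χ : DirichletCharacter K d)
    (kk N : ℕ) : K :=
  ((1 - u) / (1 - u ^ (d * p ^ N))) *
    ∑ x ∈ (Finset.range (d * p ^ N)).filter fun x => ¬ p ∣ x,
      χ ((x : ZMod d)) * (qnum q (a1 * (x : ℤ_[p]))) ^ kk * u ^ x

variable (hpK : ‖(p : K)‖ = (p : ℝ)⁻¹) {q : K} (hq1 : ‖q - 1‖ < rho p) (hq0 : q ≠ 1)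
  {u : K} (hu : ∀ f : ℕ, 1 ≤ f → 1 ≤ ‖1 - u ^ f‖)
  {d : ℕ} (hd : 1 ≤ d) {a1 : ℤ_[p]} (ha1 : IsUnit a1) (χ : DirichletCharacter K d)

include hpK hq1 hq0 hu hd ha1 in
/-- Kummer congruence at each level of the Riemann sums. -/
lemma LpqSum_kummer {k k' n : ℕ} (hkk' : Nat.ModEq ((p - 1) * p ^ n) k k') (N : ℕ) :
    ‖LpqSum a1 u q d χ k N - LpqSum a1 u q d χ k' N‖ ≤ ((p : ℝ)⁻¹) ^ n := by
  have ha1n : ‖a1‖ = 1 := PadicInt.isUnit_iff.mp ha1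
  have hdpN : 1 ≤ d * p ^ N := by
    have := hp.out.pos
    exact Nat.one_le_iff_ne_zero.mpr (by positivity)
  have hunit : ∀ x : ℕ, ¬ p ∣ x → ‖a1 * (x : ℤ_[p])‖ = 1 := by
    intro x hx
    rw [norm_mul, ha1n, one_mul]
    rcases lt_or_eq_of_le (PadicInt.norm_le_one (x : ℤ_[p])) with hlt | heq
    · exfalso
      have h2 : ‖((x : ℤ) : ℤ_[p])‖ < 1 := by exact_mod_cast hlt
      rw [PadicInt.norm_int_lt_one_iff_dvd] at h2
      exact hx (by exact_mod_cast h2)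
    · exact heq
  have hsplit : LpqSum a1 u q d χ k N - LpqSum a1 u q d χ k' N
      = ∑ x ∈ (Finset.range (d * p ^ N)).filter fun x => ¬ p ∣ x,
          ((1 - u) / (1 - u ^ (d * p ^ N)) * u ^ x) *
            (χ ((x : ZMod d)) *
              ((qnum q (a1 * (x : ℤ_[p]))) ^ k - (qnum q (a1 * (x : ℤ_[p]))) ^ k')) := by
    rw [LpqSum, LpqSum, ← mul_sub, ← Finset.sum_sub_distrib, Finset.mul_sum]
    refine Finset.sum_congr rfl fun x _ => ?_
    ring
  rw [hsplit]
  apply norm_sum_le_of_forall_le_of_nonneg (by positivity)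
  intro x hx
  rw [Finset.mem_filter, Finset.mem_range] at hx
  exact term_bound (meas_bound hu hdpN hx.1) (chi_norm_le hd χ _)
    (kummer_qnum hpK hq1 hq0 (hunit x hx.2) hkk')

include hpK hq1 hq0 hu hd ha1 in
/-- Refinement estimate for the Riemann sums. -/
lemma LpqSum_refine (kk : ℕ) {N : ℕ} (hN : 1 ≤ N) :
    ‖LpqSum a1 u q d χ kk (N + 1) - LpqSum a1 u q d χ kk N‖ ≤ ((p : ℝ)⁻¹) ^ N := by
  have hqnum1 : ∀ z : ℤ_[p], ‖qnum q z‖ ≤ 1 := qnum_norm_le_one hpK hq1 hq0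
  set m := d * p ^ N with hm
  have hm1 : 1 ≤ m := by
    have := hp.out.pos
    exact Nat.one_le_iff_ne_zero.mpr (by positivity)
  have hpm : p ∣ m := Dvd.dvd.mul_left (dvd_pow_self p (by omega)) d
  have hmp : d * p ^ (N + 1) = m * p := by rw [hm, pow_succ]; ring
  have hmp1 : 1 ≤ m * p := le_trans hm1 (Nat.le_mul_of_pos_right m hp.out.pos)
  set T : ℕ → K := fun x =>
    if ¬ p ∣ x then χ ((x : ZMod d)) * (qnum q (a1 * (x : ℤ_[p]))) ^ kk * u ^ x else 0
    with hT
  have hsum : ∀ M' : ℕ,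
      (∑ x ∈ (Finset.range M').filter fun x => ¬ p ∣ x,
        χ ((x : ZMod d)) * (qnum q (a1 * (x : ℤ_[p]))) ^ kk * u ^ x)
      = ∑ x ∈ Finset.range M', T x := fun M' => Finset.sum_filter _ _
  have hne1 : (1 : K) - u ^ m ≠ 0 := by
    intro h
    have := hu m hm1; rw [h, norm_zero] at this; linarith
  have hne2 : (1 : K) - u ^ (m * p) ≠ 0 := by
    intro h
    have := hu (m * p) hmp1; rw [h, norm_zero] at this; linarith
  have hgeom : (1 : K) - u ^ (m * p) = (1 - u ^ m) * ∑ i ∈ Finset.range p, (u ^ m) ^ i := by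
    have hgs := geom_sum_mul (u ^ m) p
    rw [← pow_mul] at hgs
    linear_combination hgs
  have hCG : (1 - u) / (1 - u ^ m)
      = (1 - u) / (1 - u ^ (m * p)) * ∑ i ∈ Finset.range p, (u ^ m) ^ i := by
    rw [div_mul_eq_mul_div, div_eq_div_iff hne1 hne2, hgeom]
    ring
  have e1 : LpqSum a1 u q d χ kk (N + 1)
      = ((1 - u) / (1 - u ^ (m * p))) * ∑ i ∈ Finset.range p, ∑ j ∈ Finset.range m,
          T (m * i + j) := by
    rw [LpqSum, hsum, hmp, sum_range_mul_eq]
  have e2 : LpqSum a1 u q d χ kk N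
      = ((1 - u) / (1 - u ^ (m * p))) * ∑ i ∈ Finset.range p, ∑ j ∈ Finset.range m,
          (u ^ m) ^ i * T j := by
    rw [LpqSum, hsum, ← hm, hCG, mul_assoc, Finset.sum_mul_sum]
  have hid : LpqSum a1 u q d χ kk (N + 1) - LpqSum a1 u q d χ kk N
      = ∑ i ∈ Finset.range p, ∑ j ∈ Finset.range m,
          ((1 - u) / (1 - u ^ (m * p))) * (T (m * i + j) - (u ^ m) ^ i * T j) := by
    rw [e1, e2, ← mul_sub, ← Finset.sum_sub_distrib, Finset.mul_sum]
    refine Finset.sum_congr rfl fun i _ => ?_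
    rw [← Finset.sum_sub_distrib, Finset.mul_sum]
  rw [hid]
  apply norm_sum_le_of_forall_le_of_nonneg (by positivity)
  intro i hi
  apply norm_sum_le_of_forall_le_of_nonneg (by positivity)
  intro j hj
  rw [Finset.mem_range] at hi hj
  by_cases hpj : p ∣ j
  · have h1 : T (m * i + j) = 0 := by
      rw [hT]
      simp only [ite_eq_right_iff, not_not]
      intro hc
      exact absurd (dvd_add (hpm.mul_right i) hpj) hc
    have h2 : T j = 0 := by
      rw [hT]
      simp only [ite_eq_right_iff, not_not]
      intro hc
      exact absurd hpj hc
    rw [h1, h2]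
    simp only [mul_zero, sub_zero, zero_sub, mul_neg, norm_neg, mul_zero, norm_zero]
    positivity
  · have hpmij : ¬ p ∣ (m * i + j) := by
      intro hc
      exact hpj ((Nat.dvd_add_right (hpm.mul_right i)).mp hc)
    have hcast : (((m * i + j : ℕ)) : ZMod d) = ((j : ℕ) : ZMod d) := by
      have hm0 : ((m : ℕ) : ZMod d) = 0 := by
        rw [hm]
        push_cast [ZMod.natCast_self]
        ring
      push_cast
      rw [hm0]
      ring
    have hTm : T (m * i + j)
        = χ ((j : ZMod d)) * (qnum q (a1 * ((m * i + j : ℕ) : ℤ_[p]))) ^ kk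
            * ((u ^ m) ^ i * u ^ j) := by
      rw [hT]
      simp only [if_pos hpmij]
      rw [hcast, pow_add, pow_mul]
    have hTj : T j = χ ((j : ZMod d)) * (qnum q (a1 * (j : ℤ_[p]))) ^ kk * u ^ j := by
      rw [hT]
      simp only [if_pos hpj]
    have harr : (1 - u) / (1 - u ^ (m * p)) * (T (m * i + j) - (u ^ m) ^ i * T j)
        = ((1 - u) / (1 - u ^ (m * p)) * u ^ (m * i + j)) * (χ ((j : ZMod d)) *
            ((qnum q (a1 * ((m * i + j : ℕ) : ℤ_[p]))) ^ kk
              - (qnum q (a1 * (j : ℤ_[p]))) ^ kk)) := by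
      rw [hTm, hTj, pow_add, pow_mul]
      ring
    have hlt : m * i + j < m * p := by
      calc m * i + j < m * i + m := by omega
      _ = m * (i + 1) := by ring
      _ ≤ m * p := Nat.mul_le_mul_left m (by omega)
    rw [harr]
    refine term_bound (meas_bound hu hmp1 hlt) (chi_norm_le hd χ _) ?_
    refine le_trans (aux_pow_sub_pow_le (hqnum1 _) (hqnum1 _) kk) ?_
    refine qnum_dist hpK hq1 hq0 _ _ N ?_
    exact ⟨a1 * ((d : ℤ_[p]) * (i : ℤ_[p])), by push_cast [hm]; ring⟩

end Main

/-- **Kummer-type congruence.** Assume `a_1 ∈ ℤ_p` is a unit.  For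
`k ≡ k' (mod (p-1)p^n)`, the `p`-adic integrals
`L(k) = ∫_{X^*} χ(x)[a_1 x:q]^k dμ_u(x)
  = lim_N ((1-u)/(1-u^{d p^N})) ∑_{0 ≤ x < d p^N, p ∤ x} χ(x)[a_1 x:q]^k u^x`
and `L(k')` both exist, and `‖L(k) - L(k')‖ ≤ p^{-n}`; this is the paper's congruence
`L_{p,q:a_1}(u:-k, χω^k) ≡ L_{p,q:a_1}(u:-k', χω^{k'}) (mod p^n)`. -/
theorem Lpq_kummer_congruence
    {p : ℕ} [Fact p.Prime] {K : Type*} [NormedField K] [CompleteSpace K]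
    [IsUltrametricDist K] (hpK : ‖(p : K)‖ = (p : ℝ)⁻¹)
    (a1 : ℤ_[p]) (ha1 : IsUnit a1)
    (u q : K) (hu : ∀ f : ℕ, 1 ≤ f → 1 ≤ ‖1 - u ^ f‖)
    (hq0 : 0 < ‖1 - q‖) (hq1 : ‖1 - q‖ < (p : ℝ) ^ (-(1 : ℝ) / ((p : ℝ) - 1)))
    (d : ℕ) (hd : 1 ≤ d) (χ : DirichletCharacter K d)
    (k k' n : ℕ) (hkk' : k ≡ k' [MOD (p - 1) * p ^ n]) :
    ∃ Lk Lk' : K,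
      Tendsto
        (fun N : ℕ =>
          ((1 - u) / (1 - u ^ (d * p ^ N))) *
            ∑ x ∈ (Finset.range (d * p ^ N)).filter fun x => ¬ p ∣ x,
              χ ((x : ZMod d)) * (qnum q (a1 * (x : ℤ_[p]))) ^ k * u ^ x)
        atTop (nhds Lk) ∧
      Tendsto
        (fun N : ℕ =>
          ((1 - u) / (1 - u ^ (d * p ^ N))) *
            ∑ x ∈ (Finset.range (d * p ^ N)).filter fun x => ¬ p ∣ x,
              χ ((x : ZMod d)) * (qnum q (a1 * (x : ℤ_[p]))) ^ k' * u ^ x)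
        atTop (nhds Lk') ∧
      ‖Lk - Lk'‖ ≤ ((p : ℝ) ^ n)⁻¹ := by
  have hq1' : ‖q - 1‖ < rho p := by
    rw [show rho p = (p : ℝ) ^ (-(1 : ℝ) / ((p : ℝ) - 1)) from rfl, norm_sub_rev]
    exact hq1
  have hq0' : q ≠ 1 := by
    intro h
    rw [h] at hq0
    simp at hq0
  have hp1R : (1 : ℝ) < (p : ℝ) := by exact_mod_cast Fact.out (p := p.Prime) |>.one_lt
  have hpinv0 : (0 : ℝ) ≤ (p : ℝ)⁻¹ := by positivity
  have hpinv1 : (p : ℝ)⁻¹ < 1 := by rw [inv_lt_one_iff₀]; right; exact hp1R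
  have hcauchy : ∀ kk : ℕ, CauchySeq (fun N => LpqSum a1 u q d χ kk (N + 1)) := by
    intro kk
    apply SeminormedAddCommGroup.cauchySeq_of_le_geometric (C := 1) (r := (p : ℝ)⁻¹) hpinv1
    intro N
    rw [norm_sub_rev, one_mul]
    calc ‖LpqSum a1 u q d χ kk (N + 1 + 1) - LpqSum a1 u q d χ kk (N + 1)‖
        ≤ ((p : ℝ)⁻¹) ^ (N + 1) := LpqSum_refine hpK hq1' hq0' hu hd ha1 χ kk (by omega)
    _ ≤ ((p : ℝ)⁻¹) ^ N := pow_le_pow_of_le_one hpinv0 hpinv1.le (by omega)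
  obtain ⟨Lk, hLk⟩ := cauchySeq_tendsto_of_complete (hcauchy k)
  obtain ⟨Lk', hLk'⟩ := cauchySeq_tendsto_of_complete (hcauchy k')
  have hSk : Tendsto (fun N => LpqSum a1 u q d χ k N) atTop (nhds Lk) :=
    (tendsto_add_atTop_iff_nat 1).mp hLk
  have hSk' : Tendsto (fun N => LpqSum a1 u q d χ k' N) atTop (nhds Lk') :=
    (tendsto_add_atTop_iff_nat 1).mp hLk'
  refine ⟨Lk, Lk', hSk, hSk', ?_⟩
  rw [← inv_pow]
  apply le_of_tendsto ((hSk.sub hSk').norm)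
  filter_upwards with N
  exact LpqSum_kummer hpK hq1' hq0' hu hd ha1 χ hkk' N
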